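/- Under the copy-assignment rule ASGNC, if exclusivity holds before the statement and the precondition σ_y = 0⃗ holds, then for either of the two permitted post-states ({σ_x' = σ_x, σ_y' = 0⃗} or {σ_y' = σ_x, σ_x' = 0⃗}), exclusivity holds after the statement. -/
import Mathlib


/-- The exclusivity invariant: every variable state equals the rtoken r or 0⃗, and at most
one variable holds r. -/
def Exclusive {I : Type*} {n : ℕ} (r : Fin n → ℕ) (M : I → Fin n → ℕ) : Prop :=
  (∀ i, M i = r ∨ M i = fun _ => 0) ∧ ∀ i j, M i = r → M j = r → i = j

/-- Under the copy-assignment rule ASGNC (with precondition M(y) = 0⃗), either permitted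
post-state — {σ_x' = σ_x, σ_y' = 0⃗} or {σ_y' = σ_x, σ_x' = 0⃗} — satisfies exclusivity. -/
theorem asgnc_preserves_exclusivity {I : Type*} [Fintype I] [DecidableEq I] {n : ℕ}
    (r : Fin n → ℕ) (hr : r ≠ fun _ => 0)
    (M : I → Fin n → ℕ) (x y : I)
    (hM : Exclusive r M) (hy : M y = fun _ => 0) :
    Exclusive r (Function.update M y (fun _ => 0)) ∧
    Exclusive r (Function.update (Function.update M x (fun _ => 0)) y (M x)) := by
  obtain ⟨h1, h2⟩ := hM
  constructor
  · have : Function.update M y (fun _ => 0) = M := by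
      rw [← hy]; exact Function.update_eq_self y M
    rw [this]; exact ⟨h1, h2⟩
  · set N := Function.update (Function.update M x (fun _ => 0)) y (M x) with hN
    have hNval : ∀ i, N i = if i = y then M x else if i = x then (fun _ => 0) else M i := by
      intro i
      by_cases hiy : i = y
      · simp [hN, hiy]
      · by_cases hix : i = x <;> simp [hN, hiy, hix, Function.update]
    constructor
    · intro i
      rw [hNval i]
      by_cases hiy : i = y
      · simpa [hiy] using h1 x
      · by_cases hix : i = x
        · have hxy : x ≠ y := hix ▸ hiy
          simp [hiy, hix, hxy]
        · simp [hiy, hix]; exact h1 i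
    · intro i j hi hj
      rw [hNval i] at hi
      rw [hNval j] at hj
      by_cases hiy : i = y <;> by_cases hjy : j = y
      · rw [hiy, hjy]
      · exfalso
        simp [hiy] at hi
        by_cases hjx : j = x
        · have hxy : x ≠ y := hjx ▸ hjy
          simp [hjy, hjx, hxy] at hj; exact hr hj.symm
        · simp [hjy, hjx] at hj
          exact hjx (h2 j x hj hi)
      · exfalso
        simp [hjy] at hj
        by_cases hix : i = x
        · have hxy : x ≠ y := hix ▸ hiy
          simp [hiy, hix, hxy] at hi; exact hr hi.symm
        · simp [hiy, hix] at hi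
          exact hix (h2 i x hi hj)
      · by_cases hix : i = x <;> by_cases hjx : j = x
        · rw [hix, hjx]
        · have hxy : x ≠ y := hix ▸ hiy
          simp [hiy, hix, hxy] at hi; exact absurd hi.symm hr
        · have hxy : x ≠ y := hjx ▸ hjy
          simp [hjy, hjx, hxy] at hj; exact absurd hj.symm hr
        · simp [hiy, hix] at hi
          simp [hjy, hjx] at hj
          exact h2 i j hi hj
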